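/- Let M and K be real symmetric positive definite n×n matrices, K_μ a real n×n matrix, and constants α̃₀ > 0, c_Ω > 0, β > 0 such that ⟨K_μ q, q⟩ ≥ α̃₀ ⟨Kq, q⟩ (coercivity) and c_Ω² ⟨Mq, q⟩ ≤ ⟨Kq, q⟩ (Poincaré inequality) hold for all q ∈ ℝⁿ. Then for every nonzero q ∈ ℝⁿ, sup over nonzero pairs (v, z) ∈ ℝⁿ × ℝⁿ of (⟨K_μ z, q⟩ − ⟨Mv, q⟩) / ((2β⟨Mv, v⟩ + ⟨Mz, z⟩)^{1/2} · ⟨Kq, q⟩^{1/2}) ≥ c_Ω · α̃₀; that is, the full discrete optimal control saddle point problem satisfies the discrete inf-sup condition with constant β₀ = c_Ω α̃₀. -/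

import Mathlib

open Matrix

/-!
The inf-sup supremum is bounded below by its value at the pair `(v, z) = (0, q)`: there the
quotient is `⟨K_μ q, q⟩ / (⟨Mq, q⟩^{1/2} ⟨Kq, q⟩^{1/2})`, which coercivity bounds below by
`α̃₀ ⟨Kq, q⟩^{1/2} / ⟨Mq, q⟩^{1/2}` and the Poincaré inequality then by `c_Ω α̃₀`.
Since `sSup` of a set of reals is junk unless the set is bounded above, one also needs that
the quotients are bounded; this follows from Cauchy–Schwarz in the `M`-inner product, because
every linear functional is bounded with respect to the `M`-norm when `M` is positive definite.
-/

section

variable {ι : Type*} [Fintype ι]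

lemma Matrix.PosSemidef.abs_mulVec_dotProduct_le {M : Matrix ι ι ℝ}
    (hM : M.PosSemidef) (x y : ι → ℝ) :
    |M *ᵥ x ⬝ᵥ y| ≤ √(M *ᵥ x ⬝ᵥ x) * √(M *ᵥ y ⬝ᵥ y) := by
  let _ := M.toSeminormedAddCommGroup hM
  let _ := M.toInnerProductSpace hM
  exact (abs_real_inner_le_norm y x).trans_eq (mul_comm _ _)

lemma Matrix.PosDef.exists_dotProduct_le_mul_sqrt [DecidableEq ι]
    {M : Matrix ι ι ℝ} (hM : M.PosDef) (u : ι → ℝ) :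
    ∃ C, 0 ≤ C ∧ ∀ x, x ⬝ᵥ u ≤ C * √(M *ᵥ x ⬝ᵥ x) := by
  set w := M⁻¹ *ᵥ u
  have hw : M *ᵥ w = u := by
    rw [mulVec_mulVec, mul_nonsing_inv _ ((isUnit_iff_isUnit_det M).mp hM.isUnit), one_mulVec]
  have hsymm : Mᵀ = M := (isHermitian_iff_isSymm.mp hM.isHermitian).eq
  refine ⟨√(M *ᵥ w ⬝ᵥ w), Real.sqrt_nonneg _, fun x => ?_⟩
  calc x ⬝ᵥ u = M *ᵥ x ⬝ᵥ w := by
        rw [← hw, dotProduct_mulVec, ← mulVec_transpose, hsymm]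
    _ ≤ |M *ᵥ x ⬝ᵥ w| := le_abs_self _
    _ ≤ √(M *ᵥ x ⬝ᵥ x) * √(M *ᵥ w ⬝ᵥ w) := hM.posSemidef.abs_mulVec_dotProduct_le x w
    _ = √(M *ᵥ w ⬝ᵥ w) * √(M *ᵥ x ⬝ᵥ x) := mul_comm _ _

lemma Matrix.PosDef.exists_saddlePoint_quotient_le [DecidableEq ι]
    {M : Matrix ι ι ℝ} (hM : M.PosDef) {β : ℝ} (hβ : 0 < β) (A : Matrix ι ι ℝ) (q : ι → ℝ) :
    ∃ C, ∀ v z : ι → ℝ,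
      (A *ᵥ z ⬝ᵥ q - M *ᵥ v ⬝ᵥ q) / √(2 * β * (M *ᵥ v ⬝ᵥ v) + M *ᵥ z ⬝ᵥ z) ≤ C := by
  obtain ⟨C, hC0, hC⟩ := hM.exists_dotProduct_le_mul_sqrt (Aᵀ *ᵥ q)
  have hM0 : ∀ x, 0 ≤ M *ᵥ x ⬝ᵥ x := fun x => by
    simpa [dotProduct_comm] using hM.posSemidef.dotProduct_mulVec_nonneg x
  have h2β : 0 < √(2 * β) := Real.sqrt_pos.mpr (by positivity)
  set m := √(M *ᵥ q ⬝ᵥ q)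
  refine ⟨C + m / √(2 * β), fun v z => ?_⟩
  set D := 2 * β * (M *ᵥ v ⬝ᵥ v) + M *ᵥ z ⬝ᵥ z
  have hz : √(M *ᵥ z ⬝ᵥ z) ≤ √D := Real.sqrt_le_sqrt (by nlinarith [hM0 v])
  have hv : √(2 * β) * √(M *ᵥ v ⬝ᵥ v) ≤ √D := by
    rw [← Real.sqrt_mul (by positivity)]
    exact Real.sqrt_le_sqrt (by nlinarith [hM0 z])
  refine div_le_of_le_mul₀ (Real.sqrt_nonneg _) (by positivity) ?_
  have hAz : A *ᵥ z ⬝ᵥ q ≤ C * √(M *ᵥ z ⬝ᵥ z) := by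
    simpa only [dotProduct_mulVec, ← mulVec_transpose, transpose_transpose] using hC z
  have hMv : -(M *ᵥ v ⬝ᵥ q) ≤ √(M *ᵥ v ⬝ᵥ v) * m :=
    (neg_le_abs _).trans (hM.posSemidef.abs_mulVec_dotProduct_le v q)
  calc A *ᵥ z ⬝ᵥ q - M *ᵥ v ⬝ᵥ q
      ≤ C * √(M *ᵥ z ⬝ᵥ z) + m / √(2 * β) * (√(2 * β) * √(M *ᵥ v ⬝ᵥ v)) := by
        rw [← mul_assoc, div_mul_cancel₀ m h2β.ne']
        linarith
    _ ≤ (C + m / √(2 * β)) * √D := by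
        rw [add_mul]; gcongr

end

lemma mul_le_div_sqrt_mul_sqrt {c α m k p : ℝ} (hc : 0 < c) (hα : 0 ≤ α) (hm : 0 < m)
    (hcm : c ^ 2 * m ≤ k) (hp : α * k ≤ p) : c * α ≤ p / (√m * √k) := by
  have hk : 0 < k := (by positivity : 0 < c ^ 2 * m).trans_le hcm
  have hsqrt : c * √m ≤ √k := by
    simpa [Real.sqrt_mul', Real.sqrt_sq hc.le, hm.le] using Real.sqrt_le_sqrt hcm
  rw [le_div_iff₀ (by positivity)]
  calc c * α * (√m * √k) = α * (c * √m) * √k := by ring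
    _ ≤ α * √k * √k := by gcongr
    _ = α * k := by rw [mul_assoc, Real.mul_self_sqrt hk.le]
    _ ≤ p := hp

theorem full_problem_infSup_general {n : ℕ}
    (M K Kμ : Matrix (Fin n) (Fin n) ℝ) (hM : M.PosDef)
    (α₀ cΩ β : ℝ) (hα₀ : 0 < α₀) (hcΩ : 0 < cΩ) (hβ : 0 < β)
    (hcoer : ∀ q : Fin n → ℝ, α₀ * ((K.mulVec q) ⬝ᵥ q) ≤ (Kμ.mulVec q) ⬝ᵥ q)
    (hpoin : ∀ q : Fin n → ℝ, cΩ ^ 2 * ((M.mulVec q) ⬝ᵥ q) ≤ (K.mulVec q) ⬝ᵥ q) :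
    ∀ q : Fin n → ℝ, q ≠ 0 →
      cΩ * α₀ ≤ sSup {r : ℝ | ∃ v z : Fin n → ℝ, (v, z) ≠ (0, 0) ∧
        r = ((Kμ.mulVec z) ⬝ᵥ q - (M.mulVec v) ⬝ᵥ q) /
          (Real.sqrt (2 * β * ((M.mulVec v) ⬝ᵥ v) + (M.mulVec z) ⬝ᵥ z) *
            Real.sqrt ((K.mulVec q) ⬝ᵥ q))} := by
  intro q hq
  obtain ⟨C, hC⟩ := hM.exists_saddlePoint_quotient_le hβ Kμ q
  have hMq : 0 < M *ᵥ q ⬝ᵥ q := by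
    simpa [dotProduct_comm] using hM.dotProduct_mulVec_pos hq
  refine le_trans ?_ (le_csSup ⟨C / √(K *ᵥ q ⬝ᵥ q), ?_⟩ ⟨0, q, by simpa using hq, rfl⟩)
  · simp only [mulVec_zero, zero_dotProduct, mul_zero, zero_add, sub_zero]
    exact mul_le_div_sqrt_mul_sqrt hcΩ hα₀.le hMq (hpoin q) (hcoer q)
  · rintro _ ⟨v, z, -, rfl⟩
    rw [← div_div]
    exact div_le_div_of_nonneg_right (hC v z) (Real.sqrt_nonneg _)

/-- Under coercivity `⟨K_μ q, q⟩ ≥ α̃₀ ⟨Kq, q⟩` and the Poincaré inequality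
`c_Ω² ⟨Mq, q⟩ ≤ ⟨Kq, q⟩`, the full discrete optimal control saddle point problem satisfies
the inf-sup condition with constant `c_Ω α̃₀`: for every nonzero `q`, the supremum over
nonzero pairs `(v, z)` of
`(⟨K_μ z, q⟩ − ⟨Mv, q⟩) / ((2β⟨Mv,v⟩ + ⟨Mz,z⟩)^{1/2} ⟨Kq,q⟩^{1/2})` is at least `c_Ω α̃₀`. -/
theorem full_problem_infSup {n : ℕ}
    (M K Kμ : Matrix (Fin n) (Fin n) ℝ) (hM : M.PosDef) (hK : K.PosDef)
    (α₀ cΩ β : ℝ) (hα₀ : 0 < α₀) (hcΩ : 0 < cΩ) (hβ : 0 < β)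
    (hcoer : ∀ q : Fin n → ℝ, α₀ * ((K.mulVec q) ⬝ᵥ q) ≤ (Kμ.mulVec q) ⬝ᵥ q)
    (hpoin : ∀ q : Fin n → ℝ, cΩ ^ 2 * ((M.mulVec q) ⬝ᵥ q) ≤ (K.mulVec q) ⬝ᵥ q) :
    ∀ q : Fin n → ℝ, q ≠ 0 →
      cΩ * α₀ ≤ sSup {r : ℝ | ∃ v z : Fin n → ℝ, (v, z) ≠ (0, 0) ∧
        r = ((Kμ.mulVec z) ⬝ᵥ q - (M.mulVec v) ⬝ᵥ q) /
          (Real.sqrt (2 * β * ((M.mulVec v) ⬝ᵥ v) + (M.mulVec z) ⬝ᵥ z) *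
            Real.sqrt ((K.mulVec q) ⬝ᵥ q))} :=
  full_problem_infSup_general M K Kμ hM α₀ cΩ β hα₀ hcΩ hβ hcoer hpoin
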